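/- arXiv:1502.02440 — 3 statements merged into one kernel-verified Lean document; each statement's English description precedes it below -/
import Mathlib

section
/- Let k₁, k₂ > 0 and δ > 0. Fix N₀ ∈ ℕ. For every t > 0 and every n ∈ ℕ with n·δ ≤ t, consider switching instants τ_i = t - (n+1-i)·δ for i = 1,…,n and τ₀ = 0, together with N₀ additional instants placed in (τ_n, t]. Then ∑ over all these instants τ of exp(-(k₁·(t-τ) + k₂)) ≤ exp(-k₂)·(1 + N₀ + 1/(exp(k₁·δ) - 1)). In particular the sum is bounded uniformly in t and n. -/
/-- Lemma 3.6: boundedness of the switching series for ρ affine in its second argument. -/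
theorem stmt2 (k₁ k₂ δ : ℝ) (hk₁ : 0 < k₁) (hk₂ : 0 < k₂) (hδ : 0 < δ)
    (N₀ : ℕ) (t : ℝ) (ht : 0 < t) (n : ℕ) (hn : (n : ℝ) * δ ≤ t)
    (τ : ℕ → ℝ) (hτ0 : τ 0 = 0)
    (hτ : ∀ i, 1 ≤ i → i ≤ n → τ i = t - ((n : ℝ) + 1 - (i : ℝ)) * δ)
    (extra : Fin N₀ → ℝ) (hextra : ∀ j, extra j ∈ Set.Ioc (t - δ) t) :
    (∑ i ∈ Finset.range (n + 1), Real.exp (-(k₁ * (t - τ i) + k₂))) +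
      (∑ j, Real.exp (-(k₁ * (t - extra j) + k₂))) ≤
    Real.exp (-k₂) * (1 + (N₀ : ℝ) + 1 / (Real.exp (k₁ * δ) - 1)) := by
  set r := Real.exp (-(k₁ * δ)) with hrdef
  have hr0 : 0 < r := Real.exp_pos _
  have hr1 : r < 1 := by
    rw [hrdef, Real.exp_lt_one_iff]
    nlinarith [mul_pos hk₁ hδ]
  have hgt : 1 < Real.exp (k₁ * δ) := by
    have := Real.add_one_le_exp (k₁ * δ)
    nlinarith [mul_pos hk₁ hδ]
  -- relate r/(1-r) with 1/(exp(k₁δ)-1)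
  have hkey : r / (1 - r) = 1 / (Real.exp (k₁ * δ) - 1) := by
    rw [hrdef, Real.exp_neg]
    field_simp
  -- extra sum bound
  have hex : (∑ j, Real.exp (-(k₁ * (t - extra j) + k₂))) ≤ (N₀ : ℝ) * Real.exp (-k₂) := by
    calc (∑ j, Real.exp (-(k₁ * (t - extra j) + k₂)))
        ≤ ∑ _j : Fin N₀, Real.exp (-k₂) := by
          apply Finset.sum_le_sum
          intro j _
          apply Real.exp_le_exp.mpr
          have h2 := (hextra j).2
          nlinarith
      _ = (N₀ : ℝ) * Real.exp (-k₂) := by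
          simp [Finset.sum_const, Finset.card_univ]
  -- main sum
  have hmain : (∑ i ∈ Finset.range (n + 1), Real.exp (-(k₁ * (t - τ i) + k₂)))
      ≤ Real.exp (-k₂) * (1 + r / (1 - r)) := by
    rw [Finset.sum_range_succ']
    have h0 : Real.exp (-(k₁ * (t - τ 0) + k₂)) ≤ Real.exp (-k₂) := by
      rw [hτ0]
      apply Real.exp_le_exp.mpr
      nlinarith
    have hsum : (∑ i ∈ Finset.range n, Real.exp (-(k₁ * (t - τ (i + 1)) + k₂)))
        ≤ Real.exp (-k₂) * (r / (1 - r)) := by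
      have heq : ∀ i ∈ Finset.range n,
          Real.exp (-(k₁ * (t - τ (i + 1)) + k₂)) = Real.exp (-k₂) * r ^ (n - i) := by
        intro i hi
        rw [Finset.mem_range] at hi
        rw [hτ (i + 1) (by omega) (by omega)]
        rw [hrdef, ← Real.exp_nat_mul, ← Real.exp_add]
        congr 1
        push_cast [Nat.cast_sub (le_of_lt hi)]
        ring
      rw [Finset.sum_congr rfl heq, ← Finset.mul_sum]
      have hreflect : (∑ i ∈ Finset.range n, r ^ (n - i))
          = ∑ i ∈ Finset.range n, r ^ (i + 1) := by
        rw [← Finset.sum_range_reflect (fun i => r ^ (i + 1)) n]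
        apply Finset.sum_congr rfl
        intro i hi
        rw [Finset.mem_range] at hi
        congr 1
        omega
      have hgeom : (∑ i ∈ Finset.range n, r ^ (i + 1)) ≤ r / (1 - r) := by
        have h1 : (∑ i ∈ Finset.range n, r ^ (i + 1))
            = r * ∑ i ∈ Finset.range n, r ^ i := by
          rw [Finset.mul_sum]
          apply Finset.sum_congr rfl
          intro i _
          ring
        rw [h1, geom_sum_eq hr1.ne n]
        have hpow : (0 : ℝ) ≤ r ^ n := pow_nonneg hr0.le n
        have h1r : 0 < 1 - r := by linarith
        have hne1 : r - 1 ≠ 0 := by linarith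
        have hne2 : (1 : ℝ) - r ≠ 0 := by linarith
        have heq2 : r * ((r ^ n - 1) / (r - 1)) = r * (1 - r ^ n) / (1 - r) := by
          field_simp
          ring
        rw [heq2]
        gcongr
        nlinarith
      rw [hreflect]
      exact mul_le_mul_of_nonneg_left hgeom (Real.exp_pos _).le
    linarith
  calc _ ≤ Real.exp (-k₂) * (1 + r / (1 - r)) + (N₀ : ℝ) * Real.exp (-k₂) := by
        linarith
    _ = Real.exp (-k₂) * (1 + (N₀ : ℝ) + r / (1 - r)) := by ring
    _ = Real.exp (-k₂) * (1 + (N₀ : ℝ) + 1 / (Real.exp (k₁ * δ) - 1)) := by rw [hkey]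
end

section
/- Let ε' > 0, τ_a > 0, N₀ ∈ ℕ, and t > 0. Suppose the instants τ₁ < τ₂ < ⋯ < τ_n with n = ⌊t/τ_a⌋ satisfy τ_i = t - (n+1-i)·τ_a, and there are N₀ additional instants in (τ_n, t]. Then ∑ over all these instants τ of exp(-ε'·(t-τ)) ≤ 1 + N₀ + 1/(exp(ε'·τ_a) - 1). -/
/-- Claim in the proof of Proposition 5.1: the worst-case ADT switching series is bounded. -/
theorem stmt5 (ε' τa : ℝ) (hε : 0 < ε') (hτa : 0 < τa) (N₀ : ℕ) (t : ℝ) (ht : 0 < t)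
    (n : ℕ) (hn : n = ⌊t / τa⌋₊)
    (τ : ℕ → ℝ) (hτ0 : τ 0 = 0)
    (hτ : ∀ i, 1 ≤ i → i ≤ n → τ i = t - ((n : ℝ) + 1 - (i : ℝ)) * τa)
    (extra : Fin N₀ → ℝ) (hextra : ∀ j, extra j ∈ Set.Ioc (t - τa) t) :
    (∑ i ∈ Finset.range (n + 1), Real.exp (-ε' * (t - τ i))) +
      (∑ j, Real.exp (-ε' * (t - extra j))) ≤
    1 + (N₀ : ℝ) + 1 / (Real.exp (ε' * τa) - 1) := by
  set r : ℝ := Real.exp (-(ε' * τa)) with hrdef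
  have hr0 : 0 < r := Real.exp_pos _
  have hr1 : r < 1 := by
    rw [hrdef, Real.exp_lt_one_iff]
    nlinarith
  have hsub : 0 < 1 - r := by linarith
  -- second sum
  have h2 : (∑ j, Real.exp (-ε' * (t - extra j))) ≤ (N₀ : ℝ) := by
    calc (∑ j, Real.exp (-ε' * (t - extra j))) ≤ ∑ _j : Fin N₀, (1 : ℝ) := by
          apply Finset.sum_le_sum
          intro j _
          have h := (hextra j).2
          calc Real.exp (-ε' * (t - extra j)) ≤ Real.exp 0 := by
                apply Real.exp_le_exp.mpr; nlinarith
            _ = 1 := Real.exp_zero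
      _ = (N₀ : ℝ) := by simp
  -- first sum
  have h1 : (∑ i ∈ Finset.range (n + 1), Real.exp (-ε' * (t - τ i))) ≤
      1 + 1 / (Real.exp (ε' * τa) - 1) := by
    rw [Finset.sum_range_succ']
    have h0 : Real.exp (-ε' * (t - τ 0)) ≤ 1 := by
      rw [hτ0]
      calc Real.exp (-ε' * (t - 0)) ≤ Real.exp 0 := by
            apply Real.exp_le_exp.mpr; nlinarith
        _ = 1 := Real.exp_zero
    have hterm : ∀ i ∈ Finset.range n, Real.exp (-ε' * (t - τ (i + 1))) = r ^ (n - i) := by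
      intro i hi
      rw [Finset.mem_range] at hi
      rw [hτ (i + 1) (by omega) (by omega)]
      have hcast : ((n : ℝ) + 1 - ((i : ℕ) + 1 : ℕ)) = ((n - i : ℕ) : ℝ) := by
        push_cast [Nat.cast_sub hi.le]; ring
      rw [← Real.exp_nat_mul]
      congr 1
      rw [show (t - (t - ((n : ℝ) + 1 - (((i : ℕ) + 1 : ℕ) : ℝ)) * τa)) =
          ((n : ℝ) + 1 - (((i : ℕ) + 1 : ℕ) : ℝ)) * τa by ring, hcast]
      ring
    rw [Finset.sum_congr rfl hterm]
    have hrefl : ∑ i ∈ Finset.range n, r ^ (n - i) = ∑ j ∈ Finset.range n, r ^ (j + 1) := by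
      rw [← Finset.sum_range_reflect (fun j => r ^ (j + 1)) n]
      apply Finset.sum_congr rfl
      intro j hj
      rw [Finset.mem_range] at hj
      congr 1
      omega
    rw [hrefl]
    have hgeom : ∑ j ∈ Finset.range n, r ^ (j + 1) = r * ∑ j ∈ Finset.range n, r ^ j := by
      rw [Finset.mul_sum]
      apply Finset.sum_congr rfl
      intro j _
      rw [pow_succ]; ring
    have hsumle : ∑ j ∈ Finset.range n, r ^ j ≤ 1 / (1 - r) := by
      rw [geom_sum_eq (ne_of_lt hr1)]
      have heq : (r ^ n - 1) / (r - 1) = (1 - r ^ n) / (1 - r) := by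
        rw [div_eq_div_iff (by linarith) (by linarith)]
        ring
      rw [heq, div_le_div_iff₀ hsub hsub]
      have : 0 ≤ r ^ n := le_of_lt (pow_pos hr0 n)
      nlinarith
    have hE : Real.exp (ε' * τa) = 1 / r := by
      rw [hrdef, Real.exp_neg]
      field_simp
    have hfinal : r * (1 / (1 - r)) = 1 / (Real.exp (ε' * τa) - 1) := by
      rw [hE]
      field_simp
    calc ∑ j ∈ Finset.range n, r ^ (j + 1) + Real.exp (-ε' * (t - τ 0))
        ≤ r * (1 / (1 - r)) + 1 := by
          rw [hgeom]
          have := mul_le_mul_of_nonneg_left hsumle (le_of_lt hr0)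
          linarith
      _ = 1 + 1 / (Real.exp (ε' * τa) - 1) := by rw [hfinal]; ring
  linarith
end

section
/- Let N₀ > 0, τ_a > 0, and t > 0, and set n = ⌊t/τ_a⌋. If instants 0 < τ₁ < ⋯ < τ_n ≤ t satisfy the average dwell time constraint that every interval (s, t] of length (t-s) contains at most N₀ + (t-s)/τ_a of the instants, and the instants are pushed as late as possible, then τ_i ≥ t - (n+1-i)·τ_a is impossible to improve: i.e., the placement τ_i = t - (n+1-i)·τ_a satisfies the constraint, and any placement with some τ_i > t - (n+1-i)·τ_a violates it for some interval. -/
/-- Worst-case placement of switching instants under average dwell time (Remark 3.5). -/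
theorem stmt17 (N₀ τa t : ℝ) (hN₀ : 0 < N₀) (hτa : 0 < τa) (ht : 0 < t)
    (n : ℕ) (hn : n = ⌊t / τa⌋₊) :
    (∀ s : ℝ, 0 ≤ s → s < t →
        (({i : ℕ | 1 ≤ i ∧ i ≤ n ∧ s < t - ((n : ℝ) + 1 - (i : ℝ)) * τa}.ncard : ℝ) + N₀ ≤
          N₀ + (t - s) / τa)) ∧
    (∀ τ' : ℕ → ℝ, (∀ i, 1 ≤ i → i < n → τ' i < τ' (i + 1)) →
        (1 ≤ n → 0 < τ' 1) → (1 ≤ n → τ' n ≤ t) →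
        (∃ i, 1 ≤ i ∧ i ≤ n ∧ t - ((n : ℝ) + 1 - (i : ℝ)) * τa < τ' i) →
        ∃ s : ℝ, 0 ≤ s ∧ s < t ∧
          N₀ + (t - s) / τa <
            ({i : ℕ | 1 ≤ i ∧ i ≤ n ∧ s < τ' i}.ncard : ℝ) + N₀) := by
  constructor
  · -- Part 1: the extremal placement satisfies the constraint
    intro s hs0 hst
    set r : ℝ := (t - s) / τa with hrdef
    have hr : 0 < r := div_pos (by linarith) hτa
    have hc1 : 1 ≤ ⌈r⌉₊ := Nat.one_le_ceil_iff.mpr hr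
    set m : ℕ := n + 1 - ⌈r⌉₊ with hm
    have hmn : m ≤ n := by omega
    set S : Set ℕ := {i : ℕ | 1 ≤ i ∧ i ≤ n ∧ s < t - ((n : ℝ) + 1 - (i : ℝ)) * τa}
      with hS
    have hsub : S ⊆ Set.Ioc m n := by
      rintro i ⟨hi1, hin, hsi⟩
      refine ⟨?_, hin⟩
      have hlt : (n : ℝ) + 1 - (i : ℝ) < r := by
        rw [hrdef, lt_div_iff₀ hτa]
        linarith
      by_contra h
      push_neg at h
      -- i ≤ m
      have hcle : ⌈r⌉₊ ≤ n := by omega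
      have hcast : (m : ℝ) = (n : ℝ) + 1 - (⌈r⌉₊ : ℝ) := by
        have : (m : ℕ) = n + 1 - ⌈r⌉₊ := hm
        push_cast [hm, Nat.cast_sub (by omega : ⌈r⌉₊ ≤ n + 1)]
        ring
      have him : (i : ℝ) ≤ (m : ℝ) := by exact_mod_cast h
      have : (⌈r⌉₊ : ℝ) < r := by linarith [hcast ▸ him]
      exact absurd (Nat.le_ceil r) (not_le.mpr this)
    have hfin : (Set.Ioc m n).Finite := Set.finite_Ioc m n
    have hcard : S.ncard ≤ (Set.Ioc m n).ncard := Set.ncard_le_ncard hsub hfin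
    have hIoc : (Set.Ioc m n).ncard = n - m := by
      rw [← Finset.coe_Ioc, Set.ncard_coe_finset, Nat.card_Ioc]
    have hbound : ((n - m : ℕ) : ℝ) ≤ r := by
      have hceil : (⌈r⌉₊ : ℝ) < r + 1 := Nat.ceil_lt_add_one hr.le
      by_cases hcle : ⌈r⌉₊ ≤ n + 1
      · have : n - m = ⌈r⌉₊ - 1 := by omega
        rw [this]
        have : ((⌈r⌉₊ - 1 : ℕ) : ℝ) = (⌈r⌉₊ : ℝ) - 1 := by
          push_cast [Nat.cast_sub hc1]; ring
        rw [this]; linarith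
      · have hm0 : m = 0 := by omega
        have : (n : ℝ) < r := by
          have : ((n : ℕ) : ℝ) + 2 ≤ (⌈r⌉₊ : ℝ) := by exact_mod_cast (by omega : n + 2 ≤ ⌈r⌉₊)
          linarith
        rw [hm0, Nat.sub_zero]
        linarith
    have : (S.ncard : ℝ) ≤ r := by
      calc (S.ncard : ℝ) ≤ ((Set.Ioc m n).ncard : ℝ) := by exact_mod_cast hcard
        _ = ((n - m : ℕ) : ℝ) := by rw [hIoc]
        _ ≤ r := hbound
    linarith
  · -- Part 2: any later placement violates the constraint
    rintro τ' hmono hpos hle ⟨i, hi1, hin, hτi⟩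
    have hn1 : 1 ≤ n := le_trans hi1 hin
    -- monotonicity on [1, n]
    have hmono' : ∀ d j, 1 ≤ j → j + d ≤ n → τ' j ≤ τ' (j + d) := by
      intro d
      induction d with
      | zero => intro j _ _; simp
      | succ d ih =>
        intro j hj1 hjd
        have h1 : τ' j ≤ τ' (j + d) := ih j hj1 (by omega)
        have h2 : τ' (j + d) < τ' (j + d + 1) := hmono (j + d) (by omega) (by omega)
        have : j + (d + 1) = j + d + 1 := by omega
        rw [this]; linarith
    have hle' : ∀ j k, 1 ≤ j → j ≤ k → k ≤ n → τ' j ≤ τ' k := by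
      intro j k hj hjk hk
      have := hmono' (k - j) j hj (by omega)
      rwa [Nat.add_sub_cancel' hjk] at this
    have hτipos : 0 < τ' i := lt_of_lt_of_le (hpos hn1) (hle' 1 i le_rfl hi1 hin)
    have hτit : τ' i ≤ t := le_trans (hle' i n hi1 hin le_rfl) (hle hn1)
    set s : ℝ := max 0 ((t - ((n : ℝ) + 1 - (i : ℝ)) * τa + τ' i) / 2) with hsdef
    have hmidlt : (t - ((n : ℝ) + 1 - (i : ℝ)) * τa + τ' i) / 2 < τ' i := by linarith
    have hsτ : s < τ' i := max_lt hτipos hmidlt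
    have hs0 : 0 ≤ s := le_max_left _ _
    have hsmid : t - ((n : ℝ) + 1 - (i : ℝ)) * τa < s := by
      have : t - ((n : ℝ) + 1 - (i : ℝ)) * τa <
          (t - ((n : ℝ) + 1 - (i : ℝ)) * τa + τ' i) / 2 := by linarith
      exact lt_of_lt_of_le this (le_max_right _ _)
    refine ⟨s, hs0, lt_of_lt_of_le hsτ hτit, ?_⟩
    set S : Set ℕ := {j : ℕ | 1 ≤ j ∧ j ≤ n ∧ s < τ' j} with hS
    have hfin : S.Finite := (Set.finite_Icc 1 n).subset (fun j hj => ⟨hj.1, hj.2.1⟩)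
    have hsub : Set.Icc i n ⊆ S := by
      rintro j ⟨hij, hjn⟩
      exact ⟨le_trans hi1 hij, hjn, lt_of_lt_of_le hsτ (hle' i j hi1 hij hjn)⟩
    have hcard : (Set.Icc i n).ncard ≤ S.ncard := Set.ncard_le_ncard hsub hfin
    have hIcc : (Set.Icc i n).ncard = n + 1 - i := by
      rw [← Finset.coe_Icc, Set.ncard_coe_finset, Nat.card_Icc]
    have hcastIcc : (((Set.Icc i n).ncard : ℕ) : ℝ) = (n : ℝ) + 1 - (i : ℝ) := by
      rw [hIcc]
      push_cast [Nat.cast_sub (by omega : i ≤ n + 1)]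
      ring
    have hkey : (t - s) / τa < (S.ncard : ℝ) := by
      have h1 : (t - s) / τa < (n : ℝ) + 1 - (i : ℝ) := by
        rw [div_lt_iff₀ hτa]
        nlinarith [hsmid]
      have h2 : (n : ℝ) + 1 - (i : ℝ) ≤ (S.ncard : ℝ) := by
        rw [← hcastIcc]
        exact_mod_cast hcard
      linarith
    linarith
end
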